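/- arXiv:1910.05936 — 2 statements merged into one kernel-verified Lean document; each statement's English description precedes it below -/
import Mathlib

section
/- Let n be a non-negative integer. If n is even, then DST(n) = DST₀(n). If n is odd, then DST(n) is the disjoint union of DST₀(n) and the coset DST₀(n) + U_n. -/
open Finset

namespace Steinhaus

/-- Extended binomial coefficient `C(a,b)` for integers `a`, `b`:
`C(a,0) = 1`, `C(0,b) = 0` for `b > 0`, Pascal's rule everywhere; in particular
`C(a,b) = 0` for `b < 0` and `C(a,b) = (-1)^b C(b-a-1,b)` for `a < 0 ≤ b`. -/
def ibinom (a b : ℤ) : ℤ :=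
  if b < 0 then 0
  else if 0 ≤ a then (a.toNat.choose b.toNat : ℤ)
  else (-1) ^ b.toNat * ((b - a - 1).toNat.choose b.toNat : ℤ)

/-- `(i,j)` is an index of the triangle of size `n`, i.e. `1 ≤ i ≤ j ≤ n`. -/
def InTri (n i j : ℕ) : Prop := 1 ≤ i ∧ i ≤ j ∧ j ≤ n

instance (n i j : ℕ) : Decidable (InTri n i j) :=
  inferInstanceAs (Decidable (1 ≤ i ∧ i ≤ j ∧ j ≤ n))

/-- The `ZMod 2`-vector space of binary Steinhaus triangles of size `n`,
realized as functions `ℕ → ℕ → ZMod 2` vanishing outside the triangle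
`{(i,j) | 1 ≤ i ≤ j ≤ n}` and satisfying the local rule
`a i j = a (i-1) (j-1) + a (i-1) j` inside it. -/
def ST (n : ℕ) : Submodule (ZMod 2) (ℕ → ℕ → ZMod 2) where
  carrier := {a | (∀ i j, ¬ InTri n i j → a i j = 0) ∧
    ∀ i j, 2 ≤ i → i ≤ j → j ≤ n → a i j = a (i - 1) (j - 1) + a (i - 1) j}
  add_mem' := by
    rintro a b ⟨ha0, ha1⟩ ⟨hb0, hb1⟩
    refine ⟨fun i j h => ?_, fun i j h2 hij hjn => ?_⟩
    · simp only [Pi.add_apply, ha0 i j h, hb0 i j h, add_zero]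
    · simp only [Pi.add_apply, ha1 i j h2 hij hjn, hb1 i j h2 hij hjn]
      ring
  zero_mem' := ⟨fun _ _ _ => rfl, fun _ _ _ _ _ => by simp⟩
  smul_mem' := by
    rintro c a ⟨ha0, ha1⟩
    refine ⟨fun i j h => ?_, fun i j h2 hij hjn => ?_⟩
    · simp only [Pi.smul_apply, ha0 i j h, smul_zero]
    · simp only [Pi.smul_apply, ha1 i j h2 hij hjn, smul_add]

/-- The first row of the triangle `a` (of size `n`) is the sequence `S`;
equivalently, `a = ∇S`. -/
def FirstRow (n : ℕ) (a : ℕ → ℕ → ZMod 2) (S : ℕ → ZMod 2) : Prop :=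
  ∀ j, 1 ≤ j → j ≤ n → a 1 j = S j

/-- The rotation `r` by 120 degrees: `r(a)_{i,j} = a_{j-i+1, n-i+1}`. -/
def rot (n : ℕ) (a : ℕ → ℕ → ZMod 2) : ℕ → ℕ → ZMod 2 :=
  fun i j => if InTri n i j then a (j - i + 1) (n - i + 1) else 0

/-- The horizontal reflection `h`: `h(a)_{i,j} = a_{i, n-j+i}`. -/
def hrefl (n : ℕ) (a : ℕ → ℕ → ZMod 2) : ℕ → ℕ → ZMod 2 :=
  fun i j => if InTri n i j then a i (n - j + i) else 0

lemma rot_add (n : ℕ) (a b : ℕ → ℕ → ZMod 2) :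
    rot n (a + b) = rot n a + rot n b := by
  funext i j
  simp only [rot, Pi.add_apply]
  split_ifs <;> simp

lemma rot_smul (n : ℕ) (c : ZMod 2) (a : ℕ → ℕ → ZMod 2) :
    rot n (c • a) = c • rot n a := by
  funext i j
  simp only [rot, Pi.smul_apply]
  split_ifs <;> simp

lemma hrefl_add (n : ℕ) (a b : ℕ → ℕ → ZMod 2) :
    hrefl n (a + b) = hrefl n a + hrefl n b := by
  funext i j
  simp only [hrefl, Pi.add_apply]
  split_ifs <;> simp

lemma hrefl_smul (n : ℕ) (c : ZMod 2) (a : ℕ → ℕ → ZMod 2) :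
    hrefl n (c • a) = c • hrefl n a := by
  funext i j
  simp only [hrefl, Pi.smul_apply]
  split_ifs <;> simp

/-- The linear map `ρ = r² + r + id`. -/
def rho (n : ℕ) (a : ℕ → ℕ → ZMod 2) : ℕ → ℕ → ZMod 2 :=
  rot n (rot n a) + rot n a + a

/-- The subspace of rotationally symmetric Steinhaus triangles (fixed by `r`). -/
def RST (n : ℕ) : Submodule (ZMod 2) (ℕ → ℕ → ZMod 2) where
  carrier := {a | a ∈ ST n ∧ rot n a = a}
  add_mem' := by
    rintro a b ⟨ha, ha'⟩ ⟨hb, hb'⟩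
    exact ⟨add_mem ha hb, by rw [rot_add, ha', hb']⟩
  zero_mem' := ⟨zero_mem _, by funext i j; simp [rot]⟩
  smul_mem' := by
    rintro c a ⟨ha, ha'⟩
    exact ⟨Submodule.smul_mem _ c ha, by rw [rot_smul, ha']⟩

/-- The subspace of horizontally symmetric Steinhaus triangles (fixed by `h`). -/
def HST (n : ℕ) : Submodule (ZMod 2) (ℕ → ℕ → ZMod 2) where
  carrier := {a | a ∈ ST n ∧ hrefl n a = a}
  add_mem' := by
    rintro a b ⟨ha, ha'⟩ ⟨hb, hb'⟩
    exact ⟨add_mem ha hb, by rw [hrefl_add, ha', hb']⟩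
  zero_mem' := ⟨zero_mem _, by funext i j; simp [hrefl]⟩
  smul_mem' := by
    rintro c a ⟨ha, ha'⟩
    exact ⟨Submodule.smul_mem _ c ha, by rw [hrefl_smul, ha']⟩

/-- The subspace of dihedrally symmetric Steinhaus triangles (fixed by `r` and `h`). -/
def DST (n : ℕ) : Submodule (ZMod 2) (ℕ → ℕ → ZMod 2) where
  carrier := {a | a ∈ ST n ∧ rot n a = a ∧ hrefl n a = a}
  add_mem' := by
    rintro a b ⟨ha, ha', ha''⟩ ⟨hb, hb', hb''⟩
    exact ⟨add_mem ha hb, by rw [rot_add, ha', hb'], by rw [hrefl_add, ha'', hb'']⟩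
  zero_mem' := ⟨zero_mem _, by funext i j; simp [rot], by funext i j; simp [hrefl]⟩
  smul_mem' := by
    rintro c a ⟨ha, ha', ha''⟩
    exact ⟨Submodule.smul_mem _ c ha, by rw [rot_smul, ha'],
      by rw [hrefl_smul, ha'']⟩

/-- `σ₂`: the sum of the first `n` terms of a sequence over `ZMod 2`. -/
def seqSum (n : ℕ) (S : ℕ → ZMod 2) : ZMod 2 := ∑ j ∈ Finset.Icc 1 n, S j

/-- The subspace `DST₀(n)` of dihedrally symmetric Steinhaus triangles whose
first row has zero sum. -/
def DST0 (n : ℕ) : Submodule (ZMod 2) (ℕ → ℕ → ZMod 2) where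
  carrier := {a | a ∈ DST n ∧ seqSum n (a 1) = 0}
  add_mem' := by
    rintro a b ⟨ha, ha'⟩ ⟨hb, hb'⟩
    refine ⟨add_mem ha hb, ?_⟩
    have h : seqSum n ((a + b) 1) = seqSum n (a 1) + seqSum n (b 1) := by
      simp [seqSum, Finset.sum_add_distrib]
    rw [h, ha', hb', add_zero]
  zero_mem' := ⟨zero_mem _, by simp [seqSum]⟩
  smul_mem' := by
    rintro c a ⟨ha, ha'⟩
    refine ⟨Submodule.smul_mem _ c ha, ?_⟩
    have h : seqSum n ((c • a) 1) = c • seqSum n (a 1) := by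
      simp [seqSum, smul_eq_mul, Finset.mul_sum]
    rw [h, ha', smul_zero]

/-- The derived sequence `∂S`. -/
def der (S : ℕ → ZMod 2) : ℕ → ZMod 2 := fun j => S j + S (j + 1)

/-- The antiderived sequence `∫_{i,x} S`, whose `j`-th term is
`x + Σ_{k=1}^{i-1} S k + Σ_{k=1}^{j-1} S k`. -/
def antider (i : ℕ) (x : ZMod 2) (S : ℕ → ZMod 2) : ℕ → ZMod 2 :=
  fun j => x + (∑ k ∈ Finset.Ico 1 i, S k) + (∑ k ∈ Finset.Ico 1 j, S k)

/-- A sequence of length `n` is symmetric. -/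
def SymmSeq (n : ℕ) (S : ℕ → ZMod 2) : Prop :=
  ∀ j, 1 ≤ j → j ≤ n → S (n - j + 1) = S j

/-- The binomial sequence `bs(k,l)` whose `j`-th term is `C(l+j-1, k) mod 2`. -/
def bseq (k l : ℤ) : ℕ → ZMod 2 := fun j => ((ibinom (l + (j : ℤ) - 1) k : ℤ) : ZMod 2)

/-- The map `H : ST(n) → ST(n-3)` removing the first row and the two sides. -/
def Hmap (n : ℕ) (a : ℕ → ℕ → ZMod 2) : ℕ → ℕ → ZMod 2 :=
  fun i j => if InTri (n - 3) i j then a (1 + i) (2 + j) else 0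

/-- The projection `π_G` of a subspace `V` of triangles onto coordinates in `G`. -/
def proj (V : Submodule (ZMod 2) (ℕ → ℕ → ZMod 2)) (G : Set (ℕ × ℕ)) :
    V →ₗ[ZMod 2] (G → ZMod 2) where
  toFun a := fun p => (a : ℕ → ℕ → ZMod 2) p.1.1 p.1.2
  map_add' := fun _ _ => rfl
  map_smul' := fun _ _ => rfl

/-- `G` is a generating index set of the subspace `V` of `ST(n)`:
`G` consists of triangle indices and `π_G : V → (ZMod 2)^G` is an isomorphism. -/
def IsGenIndexSet (n : ℕ) (V : Submodule (ZMod 2) (ℕ → ℕ → ZMod 2))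
    (G : Set (ℕ × ℕ)) : Prop :=
  (∀ p ∈ G, InTri n p.1 p.2) ∧ Function.Bijective (proj V G)

end Steinhaus

/-!
A triangle fixed by `h` has a palindromic first row; for even `n` its terms cancel in pairs,
so `σ₂` vanishes on `DST(n)`.
For odd `n`, `σ₂` is a linear form on `DST(n)` with kernel `DST₀(n)`, and it suffices to find
an element of `DST(n)` on which it takes the value `1`. Since `r³ = id` and `h r = r² h`,
`ρ = r² + r + id` maps `h`-symmetric triangles into `DST(n)`. The triangle `∇((1)_n)` is
`h`-symmetric, being zero below its first row, and the first row of `ρ(∇((1)_n))` is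
`(1)_n` plus the indicators of its two ends, whose sum is `n + 2 ≡ 1`.
-/

theorem AddSubgroup.coe_eq_union_image_add_of_map_eq_one {M : Type*} [AddCommGroup M]
    (V : AddSubgroup M) (φ : M →+ ZMod 2) {V₀ : Set M}
    (hV₀ : ∀ x, x ∈ V₀ ↔ x ∈ V ∧ φ x = 0) {v : M} (hv : v ∈ V) (hφv : φ v = 1) :
    (V : Set M) = V₀ ∪ (· + v) '' V₀ ∧ Disjoint V₀ ((· + v) '' V₀) := by
  have eq_one_of_ne_zero : ∀ z : ZMod 2, z ≠ 0 → z = 1 := by decide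
  refine ⟨Set.Subset.antisymm (fun x hx => ?_) ?_, ?_⟩
  · by_cases hφx : φ x = 0
    · exact Or.inl ((hV₀ x).2 ⟨hx, hφx⟩)
    · refine Or.inr ⟨x - v, (hV₀ _).2 ⟨sub_mem hx hv, ?_⟩, sub_add_cancel x v⟩
      rw [map_sub, eq_one_of_ne_zero _ hφx, hφv, sub_self]
  · rintro x (hx | ⟨y, hy, rfl⟩)
    · exact ((hV₀ x).1 hx).1
    · exact add_mem ((hV₀ y).1 hy).1 hv
  · rw [Set.disjoint_left]
    rintro _ hx ⟨y, hy, rfl⟩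
    have h := ((hV₀ _).1 hx).2
    rw [map_add, ((hV₀ y).1 hy).2, hφv, zero_add] at h
    exact one_ne_zero h

namespace Steinhaus

theorem SymmSeq.seqSum_eq_zero {n : ℕ} {S : ℕ → ZMod 2} (hS : SymmSeq n S) (hn : Even n) :
    seqSum n S = 0 := by
  refine Finset.sum_involution (fun j _ => n - j + 1) (fun j hj => ?_) (fun j hj _ => ?_)
    (fun j hj => ?_) (fun j hj => ?_) <;> rw [Finset.mem_Icc] at hj
  · rw [hS j hj.1 hj.2, CharTwo.add_self_eq_zero]
  · obtain ⟨k, rfl⟩ := hn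
    omega
  · exact Finset.mem_Icc.2 (by omega)
  · omega

def firstRowSum (n : ℕ) : (ℕ → ℕ → ZMod 2) →+ ZMod 2 where
  toFun a := seqSum n (a 1)
  map_zero' := by simp [seqSum]
  map_add' a b := by simp [seqSum, Finset.sum_add_distrib]

section Symmetries

variable {n : ℕ} {a : ℕ → ℕ → ZMod 2} {i j : ℕ}

lemma rot_apply (h : InTri n i j) : rot n a i j = a (j - i + 1) (n - i + 1) := if_pos h

lemma hrefl_apply (h : InTri n i j) : hrefl n a i j = a i (n - j + i) := if_pos h

lemma rot_rot_apply (h : InTri n i j) : rot n (rot n a) i j = a (n - j + 1) (n - j + i) := by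
  obtain ⟨h1, h2, h3⟩ := h
  rw [rot_apply ⟨h1, h2, h3⟩, rot_apply ⟨by omega, by omega, by omega⟩]
  congr 1 <;> omega

lemma rot_rot_rot (h0 : ∀ i j, ¬ InTri n i j → a i j = 0) : rot n (rot n (rot n a)) = a := by
  funext i j
  by_cases h : InTri n i j
  · obtain ⟨h1, h2, h3⟩ := h
    rw [rot_rot_apply ⟨h1, h2, h3⟩, rot_apply ⟨by omega, by omega, by omega⟩]
    congr 1 <;> omega
  · rw [rot, if_neg h, h0 i j h]

lemma hrefl_rot : hrefl n (rot n a) = rot n (rot n (hrefl n a)) := by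
  funext i j
  by_cases h : InTri n i j
  · obtain ⟨h1, h2, h3⟩ := h
    rw [rot_rot_apply ⟨h1, h2, h3⟩, hrefl_apply ⟨h1, h2, h3⟩,
      rot_apply ⟨by omega, by omega, by omega⟩, hrefl_apply ⟨by omega, by omega, by omega⟩]
    congr 1 <;> omega
  · rw [hrefl, if_neg h, rot, if_neg h]

lemma rot_mem_ST (ha : a ∈ ST n) : rot n a ∈ ST n := by
  refine ⟨fun i j h => if_neg h, fun i j h2 hij hjn => ?_⟩
  rw [rot_apply ⟨by omega, by omega, by omega⟩, rot_apply ⟨by omega, by omega, by omega⟩,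
    rot_apply ⟨by omega, by omega, by omega⟩]
  have hrule := ha.2 (j - i + 2) (n - i + 2) (by omega) (by omega) (by omega)
  rw [show j - i + 2 - 1 = j - i + 1 by omega, show n - i + 2 - 1 = n - i + 1 by omega] at hrule
  rw [show j - 1 - (i - 1) + 1 = j - i + 1 by omega, show n - (i - 1) + 1 = n - i + 2 by omega,
    show j - (i - 1) + 1 = j - i + 2 by omega, hrule, add_left_comm, CharTwo.add_self_eq_zero,
    add_zero]

theorem rho_mem_DST (ha : a ∈ HST n) : rho n a ∈ DST n := by
  have rot_cube_hrefl : rot n (rot n (rot n (hrefl n a))) = hrefl n a :=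
    rot_rot_rot fun _ _ h => if_neg h
  refine ⟨add_mem (add_mem (rot_mem_ST (rot_mem_ST ha.1)) (rot_mem_ST ha.1)) ha.1, ?_, ?_⟩
  · rw [rho, rot_add, rot_add, rot_rot_rot ha.1.1]
    abel
  · rw [rho, hrefl_add, hrefl_add, hrefl_rot, hrefl_rot, rot_cube_hrefl, ha.2]
    abel

lemma symmSeq_row_one_of_hrefl_eq (h : hrefl n a = a) : SymmSeq n (a 1) := fun j h1 h2 => by
  conv_rhs => rw [← h]
  rw [hrefl_apply ⟨le_rfl, h1, h2⟩]

end Symmetries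

section AllOnes

variable {n : ℕ} {u : ℕ → ℕ → ZMod 2}

lemma apply_eq_zero_of_firstRow_one (hu : u ∈ ST n) (hurow : FirstRow n u fun _ => 1)
    {i : ℕ} (hi : 2 ≤ i) (j : ℕ) : u i j = 0 := by
  induction i, hi using Nat.le_induction generalizing j with
  | base =>
    by_cases h : InTri n 2 j
    · obtain ⟨_, h2, h3⟩ := h
      rw [hu.2 2 j le_rfl h2 h3, hurow (j - 1) (by omega) (by omega), hurow j (by omega) h3,
        CharTwo.add_self_eq_zero]
    · exact hu.1 2 j h
  | succ i hi ih =>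
    by_cases h : InTri n (i + 1) j
    · obtain ⟨_, h2, h3⟩ := h
      rw [hu.2 (i + 1) j (by omega) h2 h3, Nat.add_sub_cancel, ih, ih, add_zero]
    · exact hu.1 (i + 1) j h

lemma mem_HST_of_firstRow_one (hu : u ∈ ST n) (hurow : FirstRow n u fun _ => 1) :
    u ∈ HST n := by
  refine ⟨hu, funext fun i => funext fun j => ?_⟩
  by_cases h : InTri n i j
  · obtain ⟨h1, h2, h3⟩ := h
    rw [hrefl_apply ⟨h1, h2, h3⟩]
    obtain rfl | hi := eq_or_lt_of_le h1
    · rw [hurow (n - j + 1) (by omega) (by omega), hurow j h2 h3]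
    · rw [apply_eq_zero_of_firstRow_one hu hurow hi, apply_eq_zero_of_firstRow_one hu hurow hi]
  · rw [hrefl, if_neg h, hu.1 i j h]

lemma seqSum_rho_row_one_of_firstRow_one (hu : u ∈ ST n) (hurow : FirstRow n u fun _ => 1)
    (hn : Odd n) : seqSum n (rho n u 1) = 1 := by
  have hn1 : 1 ≤ n := hn.pos
  have row : ∀ j ∈ Finset.Icc 1 n, rho n u 1 j = u (n - j + 1) (n - j + 1) + u j n + 1 := by
    intro j hj
    rw [Finset.mem_Icc] at hj
    have ht : InTri n 1 j := ⟨le_rfl, hj⟩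
    simp only [rho, Pi.add_apply]
    rw [rot_rot_apply ht, rot_apply ht, hurow j hj.1 hj.2,
      Nat.sub_add_cancel hj.1, Nat.sub_add_cancel hn1]
  have left_side : ∑ j ∈ Finset.Icc 1 n, u (n - j + 1) (n - j + 1) = 1 := by
    rw [Finset.sum_eq_single_of_mem n (Finset.mem_Icc.2 ⟨hn1, le_rfl⟩), Nat.sub_self]
    · exact hurow 1 le_rfl hn1
    · intro j hj hjn
      rw [Finset.mem_Icc] at hj
      exact apply_eq_zero_of_firstRow_one hu hurow (by omega) _
  have right_side : ∑ j ∈ Finset.Icc 1 n, u j n = 1 := by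
    rw [Finset.sum_eq_single_of_mem 1 (Finset.mem_Icc.2 ⟨le_rfl, hn1⟩)]
    · exact hurow n hn1 le_rfl
    · intro j hj hj1
      rw [Finset.mem_Icc] at hj
      exact apply_eq_zero_of_firstRow_one hu hurow (by omega) n
  have top : ∑ _j ∈ Finset.Icc 1 n, (1 : ZMod 2) = 1 := by
    rw [Finset.sum_const, Nat.card_Icc, Nat.add_sub_cancel, nsmul_one,
      (ZMod.natCast_eq_one_iff_odd).2 hn]
  rw [seqSum, Finset.sum_congr rfl row, Finset.sum_add_distrib, Finset.sum_add_distrib,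
    left_side, right_side, top]
  decide

end AllOnes

/-- Proposition 9. For `n` even, `DST(n) = DST₀(n)`; for `n`
odd, `DST(n)` is the disjoint union of `DST₀(n)` and the coset `DST₀(n) + U_n`,
where `U_n = ρ(∇((1)_n))`.  Here `u` denotes `∇((1)_n)`. -/
theorem statement14 (n : ℕ) (u : ℕ → ℕ → ZMod 2) (hu : u ∈ ST n)
    (hurow : FirstRow n u (fun _ => 1)) :
    (n % 2 = 0 → DST n = DST0 n) ∧
    (n % 2 = 1 →
      (DST n : Set (ℕ → ℕ → ZMod 2)) =
        (DST0 n : Set (ℕ → ℕ → ZMod 2)) ∪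
          ((fun a => a + rho n u) '' (DST0 n : Set (ℕ → ℕ → ZMod 2))) ∧
      Disjoint (DST0 n : Set (ℕ → ℕ → ZMod 2))
        ((fun a => a + rho n u) '' (DST0 n : Set (ℕ → ℕ → ZMod 2)))) := by
  refine ⟨fun hn => ?_, fun hn => ?_⟩
  · ext a
    refine ⟨fun ha => ⟨ha, ?_⟩, fun ha => ha.1⟩
    exact (symmSeq_row_one_of_hrefl_eq ha.2.2).seqSum_eq_zero (Nat.even_iff.2 hn)
  · exact AddSubgroup.coe_eq_union_image_add_of_map_eq_one (DST n).toAddSubgroup (firstRowSum n)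
      (fun _ => Iff.rfl) (rho_mem_DST (mem_HST_of_firstRow_one hu hurow))
      (seqSum_rho_row_one_of_firstRow_one hu hurow (Nat.odd_iff.2 hn))

end Steinhaus
end

section
/- Let n ≥ 1 and let S be a sequence over Z/2Z of length n-1 whose associated Steinhaus graph G(S) is even. Then the Steinhaus triangle ∇S = (a_{i,j})_{1≤i≤j≤n-1} is doubly symmetric: for every i ∈ {0,…,n-2}, the diagonal (a_{j,i+j})_{1≤j≤n-1-i} is symmetric, i.e. a_{j,i+j} = a_{n-i-j, n-j} for all j ∈ {1,…,n-1-i}. -/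
open Finset

namespace Steinhaus

/-- The Steinhaus triangle `∇S` of size `n` generated by the first row `S`,
given by `(∇S)_{i,j} = Σ_{k=0}^{i-1} C(i-1,k) S_{j-k}`. -/
def nabla (n : ℕ) (S : ℕ → ZMod 2) : ℕ → ℕ → ZMod 2 :=
  fun i j => if InTri n i j then
    ∑ k ∈ Finset.range i, ((i - 1).choose k : ZMod 2) * S (j - k) else 0

/-- The interlacing `ir(S)` of a sequence `S` of length `n-1` and its reverse:
`ir(S)_{2j-1} = S_j` and `ir(S)_{2j} = S_{n-j}`. -/
def ir (n : ℕ) (S : ℕ → ZMod 2) : ℕ → ZMod 2 :=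
  fun j => if j % 2 = 1 then S ((j + 1) / 2) else S (n - j / 2)

/-- `M` is the adjacency matrix (over `ZMod 2`) of the Steinhaus graph `G(S)`
of order `n` associated with the sequence `S` of length `n-1`. -/
def IsSteinhausAdj (n : ℕ) (S : ℕ → ZMod 2) (M : ℕ → ℕ → ZMod 2) : Prop :=
  (∀ i j, 1 ≤ i → i ≤ n → 1 ≤ j → j ≤ n → M i j = M j i) ∧
  (∀ i, 1 ≤ i → i ≤ n → M i i = 0) ∧
  (∀ j, 2 ≤ j → j ≤ n → M 1 j = S (j - 1)) ∧
  (∀ i j, 2 ≤ i → i < j → j ≤ n → M i j = M (i - 1) (j - 1) + M (i - 1) j)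

/-- Every vertex of the graph with adjacency matrix `M` (order `n`) has even degree. -/
def EvenAdj (n : ℕ) (M : ℕ → ℕ → ZMod 2) : Prop :=
  ∀ i, 1 ≤ i → i ≤ n → Even (((Finset.Icc 1 n).filter (fun j => M i j = 1)).card)

end Steinhaus

/-!
Both the Steinhaus triangle `t = ∇S` of size `n - 1` and its anti-transpose
`(p, q) ↦ t (n-q) (n-p)` obey the local rule `t p q + t p (q+1) + t (p+1) (q+1) = 0`, under
which any two consecutive anti-diagonals determine the whole triangle. The two triangles share
the anti-diagonal `p + q = n`, and they share `p + q = n - 1` as soon as the anti-diagonal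
`p + q = n` of `t` vanishes. This vanishing comes from evenness: the degree of vertex `q + 1`
telescopes to an expression of the last column of `t` through its first row and main diagonal,
and the binomial expansion of `t i (n-i)` along the last column then cancels in pairs.
-/

namespace Steinhaus

section LocalRule

variable {G : Type*} [AddCancelCommMonoid G]

/-- The Steinhaus rule on the triangle of size `N`, written symmetrically in the three cells of an
elementary triangle, so that it is preserved by the symmetries of the triangle. -/
def LocalRule (N : ℕ) (f : ℕ → ℕ → G) : Prop :=
  ∀ p q, 1 ≤ p → p ≤ q → q + 1 ≤ N → f p q + f p (q + 1) + f (p + 1) (q + 1) = 0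

lemma LocalRule.eq_of_le_middle {N : ℕ} {f g : ℕ → ℕ → G} (hf : LocalRule N f)
    (hg : LocalRule N g)
    (h₀ : ∀ p q, 1 ≤ p → p ≤ q → q ≤ N → p + q = N → f p q = g p q)
    (h₁ : ∀ p q, 1 ≤ p → p ≤ q → q ≤ N → p + q = N + 1 → f p q = g p q) :
    ∀ k p q, 1 ≤ p → p ≤ q → q ≤ N → p + q + k = N + 1 → f p q = g p q := by
  intro k
  induction k using Nat.twoStepInduction with
  | zero => exact fun p q hp hpq hq h => h₁ p q hp hpq hq (by omega)
  | one => exact fun p q hp hpq hq h => h₀ p q hp hpq hq (by omega)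
  | more k ih₀ ih₁ =>
    intro p q hp hpq hq h
    have hfg := (hf p q hp hpq (by omega)).trans (hg p q hp hpq (by omega)).symm
    rw [add_assoc, add_assoc, ih₁ p (q + 1) hp (by omega) (by omega) (by omega),
      ih₀ (p + 1) (q + 1) (by omega) (by omega) (by omega) (by omega)] at hfg
    exact add_right_cancel hfg

lemma LocalRule.eq_of_middle_le {N : ℕ} {f g : ℕ → ℕ → G} (hf : LocalRule N f)
    (hg : LocalRule N g)
    (h₀ : ∀ p q, 1 ≤ p → p ≤ q → q ≤ N → p + q = N → f p q = g p q)
    (h₁ : ∀ p q, 1 ≤ p → p ≤ q → q ≤ N → p + q = N + 1 → f p q = g p q) :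
    ∀ k p q, 1 ≤ p → p ≤ q → q ≤ N → p + q = N + k → f p q = g p q := by
  intro k
  induction k using Nat.twoStepInduction with
  | zero => exact h₀
  | one => exact h₁
  | more k ih₀ ih₁ =>
    intro p q hp hpq hq h
    obtain ⟨p, rfl⟩ : ∃ p', p = p' + 1 := ⟨p - 1, by omega⟩
    obtain ⟨q, rfl⟩ : ∃ q', q = q' + 1 := ⟨q - 1, by omega⟩
    have hfg := (hf p q (by omega) (by omega) hq).trans (hg p q (by omega) (by omega) hq).symm
    rw [ih₀ p q (by omega) (by omega) (by omega) (by omega),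
      ih₁ p (q + 1) (by omega) (by omega) hq (by omega)] at hfg
    exact add_left_cancel hfg

lemma LocalRule.eq_of_eq_on_middle {N : ℕ} {f g : ℕ → ℕ → G} (hf : LocalRule N f)
    (hg : LocalRule N g)
    (h₀ : ∀ p q, 1 ≤ p → p ≤ q → q ≤ N → p + q = N → f p q = g p q)
    (h₁ : ∀ p q, 1 ≤ p → p ≤ q → q ≤ N → p + q = N + 1 → f p q = g p q)
    {p q : ℕ} (hp : 1 ≤ p) (hpq : p ≤ q) (hq : q ≤ N) : f p q = g p q := by
  rcases le_total (p + q) (N + 1) with h | h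
  · exact hf.eq_of_le_middle hg h₀ h₁ (N + 1 - (p + q)) p q hp hpq hq (by omega)
  · exact hf.eq_of_middle_le hg h₀ h₁ (p + q - N) p q hp hpq hq (by omega)

end LocalRule

lemma eq_sum_choose_mul_of_rec {R : Type*} [CommSemiring R] (g : ℕ) (F : ℕ → ℕ → R)
    (hF : ∀ x < g, ∀ y, F x y = F (x + 1) y + F (x + 1) (y + 1)) :
    F 0 0 = ∑ r ∈ range (g + 1), (g.choose r : R) * F g r := by
  induction g generalizing F with
  | zero => simp
  | succ g ih =>
    rw [hF 0 (by omega) 0, ih (fun x y => F (x + 1) y) (fun x hx y => hF _ (by omega) y),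
      ih (fun x y => F (x + 1) (y + 1)) (fun x hx y => hF _ (by omega) (y + 1))]
    simpa using (Finset.sum_choose_succ_mul (fun i _ => F (g + 1) i) g).symm

/-- The infinite Steinhaus triangle with first row `S`; rows are indexed from `1` and row `0` is
junk. -/
def tri (S : ℕ → ZMod 2) : ℕ → ℕ → ZMod 2
  | 0 => fun _ => 0
  | 1 => S
  | i + 2 => fun j => tri S (i + 1) (j - 1) + tri S (i + 1) j

section Tri

variable (S : ℕ → ZMod 2)

lemma tri_succ_succ {p : ℕ} (hp : 1 ≤ p) (q : ℕ) :
    tri S (p + 1) (q + 1) = tri S p q + tri S p (q + 1) := by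
  obtain ⟨p, rfl⟩ : ∃ p', p = p' + 1 := ⟨p - 1, by omega⟩
  rfl

lemma tri_add_tri_add_tri {p : ℕ} (hp : 1 ≤ p) (q : ℕ) :
    tri S p q + tri S p (q + 1) + tri S (p + 1) (q + 1) = 0 := by
  rw [tri_succ_succ S hp]
  exact CharTwo.add_self_eq_zero _

lemma localRule_tri (N : ℕ) : LocalRule N (tri S) :=
  fun _ q hp _ _ => tri_add_tri_add_tri S hp q

lemma eq_tri {N : ℕ} {f : ℕ → ℕ → ZMod 2}
    (hrow : ∀ j, 1 ≤ j → j ≤ N → f 1 j = S j)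
    (hrule : ∀ i j, 2 ≤ i → i ≤ j → j ≤ N → f i j = f (i - 1) (j - 1) + f (i - 1) j) :
    ∀ i j, 1 ≤ i → i ≤ j → j ≤ N → f i j = tri S i j := by
  intro i
  induction i with
  | zero => omega
  | succ i ih =>
    intro j hi hij hj
    rcases Nat.eq_zero_or_pos i with rfl | hi
    · exact hrow j hij hj
    · obtain ⟨j, rfl⟩ : ∃ j', j = j' + 1 := ⟨j - 1, by omega⟩
      rw [hrule _ _ (by omega) hij hj, tri_succ_succ S hi]
      simp only [Nat.add_sub_cancel]
      rw [ih j hi (by omega) (by omega), ih (j + 1) hi (by omega) hj]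

lemma sum_Ico_add_succ {R : Type*} [Ring R] [CharP R 2] (f : ℕ → R) {m n : ℕ} (h : m ≤ n) :
    ∑ i ∈ Ico m n, (f i + f (i + 1)) = f m + f n := by
  simpa [CharTwo.sub_eq_add, add_comm] using Finset.sum_Ico_sub f h

lemma sum_tri_col (q : ℕ) :
    ∑ l ∈ Ico 1 (q + 1), tri S l q = tri S 1 (q + 1) + tri S (q + 1) (q + 1) := by
  rw [← sum_Ico_add_succ (fun l => tri S l (q + 1)) (by omega)]
  refine sum_congr rfl fun l hl => ?_
  rw [tri_succ_succ S (mem_Ico.1 hl).1]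
  grind

lemma sum_tri_row {p : ℕ} (hp : 1 ≤ p) {N : ℕ} (hN : p ≤ N) :
    ∑ j ∈ Ico (p + 1) (N + 1), tri S (p + 1) j = tri S p p + tri S p N := by
  rw [← sum_Ico_add_succ (tri S p) hN, ← sum_Ico_add' _ p N 1]
  exact sum_congr rfl fun j _ => tri_succ_succ S hp j

lemma tri_eq_sum_choose_col {p : ℕ} (hp : 1 ≤ p) (q g : ℕ) :
    tri S p q = ∑ r ∈ range (g + 1), (g.choose r : ZMod 2) * tri S (p + r) (q + g) := by
  refine eq_sum_choose_mul_of_rec g (fun x y => tri S (p + y) (q + x)) fun x _ y => ?_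
  have := tri_add_tri_add_tri S (p := p + y) (by omega) (q + x)
  simp only [← add_assoc]
  grind

lemma tri_eq_sum_choose_row {p : ℕ} (hp : 1 ≤ p) (q g : ℕ) :
    tri S (p + g) (q + g) = ∑ r ∈ range (g + 1), (g.choose r : ZMod 2) * tri S p (q + r) := by
  have hrec : ∀ x < g, ∀ y, tri S (p + (g - x)) (q + (g - x) + y) =
      tri S (p + (g - (x + 1))) (q + (g - (x + 1)) + y)
        + tri S (p + (g - (x + 1))) (q + (g - (x + 1)) + (y + 1)) := by
    intro x hx y
    have := tri_succ_succ S (p := p + (g - (x + 1))) (by omega) (q + (g - (x + 1)) + y)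
    simp only [show g - x = g - (x + 1) + 1 by omega]
    grind
  simpa using eq_sum_choose_mul_of_rec g _ hrec

lemma tri_eq_sum_choose_diag {p : ℕ} (hp : 1 ≤ p) (q g : ℕ) :
    tri S p (q + g) = ∑ r ∈ range (g + 1), (g.choose r : ZMod 2) * tri S (p + r) (q + r) := by
  have hrec : ∀ x < g, ∀ y, tri S (p + y) (q + y + (g - x)) =
      tri S (p + y) (q + y + (g - (x + 1)))
        + tri S (p + (y + 1)) (q + (y + 1) + (g - (x + 1))) := by
    intro x hx y
    have := tri_add_tri_add_tri S (p := p + y) (by omega) (q + y + (g - (x + 1)))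
    simp only [show g - x = g - (x + 1) + 1 by omega, ← add_assoc]
    grind
  simpa using eq_sum_choose_mul_of_rec g _ hrec

end Tri

section EvenGraph

variable {n : ℕ} {S : ℕ → ZMod 2} {M : ℕ → ℕ → ZMod 2}

lemma sum_eq_card_filter_eq_one {ι : Type*} (s : Finset ι) (f : ι → ZMod 2) :
    ∑ x ∈ s, f x = #(s.filter (f · = 1)) := by
  rw [← sum_boole]
  refine sum_congr rfl fun x _ => ?_
  generalize f x = y
  fin_cases y <;> rfl

lemma EvenAdj.sum_eq_zero (hE : EvenAdj n M) {v : ℕ} (hv : 1 ≤ v) (hvn : v ≤ n) :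
    ∑ l ∈ Ico 1 (n + 1), M v l = 0 := by
  rw [sum_eq_card_filter_eq_one, ZMod.natCast_eq_zero_iff_even]
  exact hE v hv hvn

lemma IsSteinhausAdj.eq_tri (hM : IsSteinhausAdj n S M) {p l : ℕ} (hp : 1 ≤ p) (hpl : p < l)
    (hl : l ≤ n) : M p l = tri S p (l - 1) := by
  have h := Steinhaus.eq_tri S (N := n - 1) (f := fun i j => M i (j + 1))
    (fun j hj hjn => by simpa using hM.2.2.1 (j + 1) (by omega) (by omega))
    (fun i j hi hij hjn => by
      simpa [show j - 1 + 1 = j by omega] using hM.2.2.2 i (j + 1) hi (by omega) (by omega))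
    p (l - 1) hp (by omega) (by omega)
  simpa [show l - 1 + 1 = l by omega] using h

lemma IsSteinhausAdj.sum_eq (hM : IsSteinhausAdj n S M) {q : ℕ} (hqn : q + 1 ≤ n) :
    ∑ l ∈ Ico 1 (n + 1), M (q + 1) l =
      ∑ l ∈ Ico 1 (q + 1), tri S l q
        + ∑ j ∈ Ico (q + 2) (n + 1), tri S (q + 1) (j - 1) := by
  rw [← sum_Ico_consecutive _ (by omega : 1 ≤ q + 1) (by omega : q + 1 ≤ n + 1),
    sum_eq_sum_Ico_succ_bot (by omega : q + 1 < n + 1), hM.2.1 _ (by omega) hqn, zero_add]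
  congr 1
  · refine sum_congr rfl fun l hl => ?_
    obtain ⟨hl1, hlq⟩ := mem_Ico.1 hl
    rw [hM.1 _ _ (by omega) hqn hl1 (by omega), hM.eq_tri hl1 hlq hqn, Nat.add_sub_cancel]
  · refine sum_congr rfl fun l hl => ?_
    obtain ⟨hl1, hln⟩ := mem_Ico.1 hl
    exact hM.eq_tri (by omega) (by omega) (by omega)

lemma tri_last_col (hM : IsSteinhausAdj n S M) (hE : EvenAdj n M) {q : ℕ} (hq : 1 ≤ q)
    (hqn : q ≤ n - 1) :
    tri S q (n - 1) = tri S 1 (q + 1) + tri S q q + tri S (q + 1) (q + 1) := by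
  have hdeg := hE.sum_eq_zero (v := q + 1) (by omega) (by omega)
  rw [hM.sum_eq (by omega), sum_tri_col, show n + 1 = n - 1 + 2 by omega,
    ← sum_Ico_add' _ (q + 1) (n - 1 + 1) 1] at hdeg
  simp only [Nat.add_sub_cancel] at hdeg
  rw [sum_tri_row S hq hqn] at hdeg
  grind

lemma tri_antidiag_eq_zero (hM : IsSteinhausAdj n S M) (hE : EvenAdj n M) {i : ℕ} (hi : 1 ≤ i)
    (hin : 2 * i ≤ n) : tri S i (n - i) = 0 := by
  obtain ⟨k, rfl⟩ : ∃ k, i = k + 1 := ⟨i - 1, by omega⟩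
  set c : ℕ → ZMod 2 := fun r => (k.choose r : ZMod 2)
  calc tri S (k + 1) (n - (k + 1))
      = ∑ r ∈ range (k + 1), c r * tri S (k + 1 + r) (n - 1) := by
        rw [tri_eq_sum_choose_col S hi _ k, show n - (k + 1) + k = n - 1 by omega]
    _ = ∑ r ∈ range (k + 1), c r * tri S 1 (k + 2 + r)
          + (∑ r ∈ range (k + 1), c r * tri S (k + 1 + r) (k + 1 + r)
            + ∑ r ∈ range (k + 1), c r * tri S (k + 2 + r) (k + 2 + r)) := by
        rw [← sum_add_distrib, ← sum_add_distrib]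
        refine sum_congr rfl fun r hr => ?_
        rw [tri_last_col hM hE (by omega) (by have := mem_range.1 hr; omega)]
        ring_nf
    _ = tri S (1 + k) (k + 2 + k) + (tri S (k + 1) (k + 1 + k) + tri S (k + 2) (k + 2 + k)) := by
        rw [tri_eq_sum_choose_row S le_rfl, tri_eq_sum_choose_diag S hi,
          tri_eq_sum_choose_diag S (by omega)]
    _ = 0 := by
        have := tri_succ_succ S (p := k + 1) hi (k + 1 + k)
        rw [show 1 + k = k + 1 by omega, show k + 2 + k = k + 1 + k + 1 by omega, this]
        grind

lemma tri_eq_tri_antitranspose (hM : IsSteinhausAdj n S M) (hE : EvenAdj n M) {p q : ℕ}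
    (hp : 1 ≤ p) (hpq : p ≤ q) (hq : q ≤ n - 1) : tri S p q = tri S (n - q) (n - p) := by
  have hanti : LocalRule (n - 1) (fun p q => tri S (n - q) (n - p)) := by
    intro p q hp hpq hq
    have := tri_add_tri_add_tri S (p := n - (q + 1)) (by omega) (n - (p + 1))
    rw [show n - (q + 1) + 1 = n - q by omega, show n - (p + 1) + 1 = n - p by omega] at this
    grind
  refine (localRule_tri S _).eq_of_eq_on_middle hanti (fun p q hp hpq hq h => ?_)
    (fun p q hp hpq hq h => ?_) hp hpq hq
  · have hzero := tri_antidiag_eq_zero hM hE hp (by omega)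
    have := tri_add_tri_add_tri S hp q
    rw [show n - p = q + 1 by omega] at hzero
    rw [show n - q = p + 1 by omega, show n - p = q + 1 by omega]
    grind
  · rw [show n - q = p by omega, show n - p = q by omega]

end EvenGraph

theorem statement19_general (n : ℕ) (S : ℕ → ZMod 2)
    (M : ℕ → ℕ → ZMod 2) (hM : IsSteinhausAdj n S M) (hE : EvenAdj n M)
    (a : ℕ → ℕ → ZMod 2) (ha : a ∈ ST (n - 1)) (hrow : FirstRow (n - 1) a S) :
    ∀ i j, i ≤ n - 2 → 1 ≤ j → j ≤ n - 1 - i →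
      a j (i + j) = a (n - i - j) (n - j) := by
  intro i j _ hj hji
  have ha_eq := eq_tri S hrow ha.2
  rw [ha_eq _ _ hj (by omega) (by omega), ha_eq _ _ (by omega) (by omega) (by omega), Nat.sub_sub]
  exact tri_eq_tri_antitranspose hM hE hj (by omega) (by omega)

/-- **Statement 19** (Corollary, doubly symmetric matrices). If the Steinhaus
graph `G(S)` of order `n` (adjacency matrix `M`) is even, then the Steinhaus
triangle `∇S = (a_{i,j})_{1≤i≤j≤n-1}` is doubly symmetric: all its diagonals
are symmetric, i.e. `a_{j,i+j} = a_{n-i-j,n-j}` for `i ∈ {0,…,n-2}` and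
`j ∈ {1,…,n-1-i}`. -/
theorem statement19 (n : ℕ) (hn : 1 ≤ n) (S : ℕ → ZMod 2)
    (M : ℕ → ℕ → ZMod 2) (hM : IsSteinhausAdj n S M) (hE : EvenAdj n M)
    (a : ℕ → ℕ → ZMod 2) (ha : a ∈ ST (n - 1)) (hrow : FirstRow (n - 1) a S) :
    ∀ i j, i ≤ n - 2 → 1 ≤ j → j ≤ n - 1 - i →
      a j (i + j) = a (n - i - j) (n - j) :=
  statement19_general n S M hM hE a ha hrow

end Steinhaus
end
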